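/- Let Y, r, k be reals with k real, g > 0, δ_T > 0, δ_G ≥ 0, and set δ = b·δ_T - δ_G (0 < b < 1, e > 0, f > 0). Consider the zero-sum angel-daemon game with actions {T, G} for each player and payoff (to the angel) u(T,T) = u(G,G) = Y - k·r, u(T,G) = (Y - k·r) + (1/g)(f - k·e)·δ, u(G,T) = (Y - k·r) - (1/g)(f - k·e)·δ, where the angel maximizes u and the daemon maximizes -u. Then: (i) if (f - k·e)·δ = 0, all four strategy profiles are pure Nash equilibria; (ii) if (f - k·e)·δ > 0, the profile (T, T) is the unique pure Nash equilibrium; (iii) if (f - k·e)·δ < 0, the profile (G, G) is the unique pure Nash equilibrium. -/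

import Mathlib

/-- Actions in the zero-sum fiscal-policy angel-daemon game: perturb taxes T or
government spending G. -/
inductive FiscalAct : Type
  | T : FiscalAct
  | G : FiscalAct

/-- Payoff (to the angel) of the zero-sum fiscal-policy game; the first action
is the angel's and the second the daemon's. -/
noncomputable def zsFiscalU (Y r k e f g δ : ℝ) : FiscalAct → FiscalAct → ℝ
  | FiscalAct.T, FiscalAct.T => Y - k * r
  | FiscalAct.T, FiscalAct.G => (Y - k * r) + (1 / g) * (f - k * e) * δ
  | FiscalAct.G, FiscalAct.T => (Y - k * r) - (1 / g) * (f - k * e) * δ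
  | FiscalAct.G, FiscalAct.G => Y - k * r

/-- (a, d) is a pure Nash equilibrium of the zero-sum game with payoff u to the
angel: the angel cannot increase u and the daemon cannot increase -u. -/
def IsPNEzs {α β : Type*} (u : α → β → ℝ) (a : α) (d : β) : Prop :=
  (∀ a' : α, u a' d ≤ u a d) ∧ (∀ d' : β, -u a d' ≤ -u a d)

/-!
The payoff is separable: with `c = (f - k·e)·δ / g` and `ι` the indicator of `T`, it reads
`u a d = (Y - k·r + c·ι a) - c·ι d`. In a zero-sum game with payoff `p a - q d` the two players
do not interact, each one simply maximizes his own part, so here both maximize `c·ι`. The sign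
of `c`, which is that of `(f - k·e)·δ`, decides whether `T`, `G` or every action does so.
-/

theorem isPNEzs_sub_iff {α β : Type*} (p : α → ℝ) (q : β → ℝ) (a : α) (d : β) :
    IsPNEzs (fun a d => p a - q d) a d ↔ (∀ a', p a' ≤ p a) ∧ (∀ d', q d' ≤ q d) := by
  simp only [IsPNEzs, sub_le_sub_iff_right, neg_le_neg_iff, sub_le_sub_iff_left]

namespace FiscalAct

def taxIndicator : FiscalAct → ℝ
  | T => 1
  | G => 0

theorem forall_mul_taxIndicator_le_iff_of_pos {c : ℝ} (hc : 0 < c) (a : FiscalAct) :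
    (∀ x : FiscalAct, c * x.taxIndicator ≤ c * a.taxIndicator) ↔ a = T := by
  refine ⟨fun h => ?_, fun h x => ?_⟩
  · cases a
    · rfl
    · have hT := h T
      simp only [taxIndicator, mul_one, mul_zero] at hT
      exact absurd hT hc.not_ge
  · subst h
    cases x <;> simp [taxIndicator, hc.le]

theorem forall_mul_taxIndicator_le_iff_of_neg {c : ℝ} (hc : c < 0) (a : FiscalAct) :
    (∀ x : FiscalAct, c * x.taxIndicator ≤ c * a.taxIndicator) ↔ a = G := by
  refine ⟨fun h => ?_, fun h x => ?_⟩
  · cases a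
    · have hG := h G
      simp only [taxIndicator, mul_one, mul_zero] at hG
      exact absurd hG hc.not_ge
    · rfl
  · subst h
    cases x <;> simp [taxIndicator, hc.le]

end FiscalAct

open FiscalAct in
theorem zsFiscalU_eq (Y r k e f g δ : ℝ) :
    zsFiscalU Y r k e f g δ = fun a d =>
      (Y - k * r + (f - k * e) * δ / g * a.taxIndicator) -
        (f - k * e) * δ / g * d.taxIndicator := by
  funext a d
  cases a <;> cases d <;> simp only [zsFiscalU, taxIndicator] <;> ring

theorem zero_sum_fiscal_PNE_general
    (Y r k e f g : ℝ)
    (hg : 0 < g)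
    (δ : ℝ) :
    let u := zsFiscalU Y r k e f g δ
    ((f - k * e) * δ = 0 → ∀ a d : FiscalAct, IsPNEzs u a d) ∧
    (0 < (f - k * e) * δ →
      ∀ a d : FiscalAct, IsPNEzs u a d ↔ (a = FiscalAct.T ∧ d = FiscalAct.T)) ∧
    ((f - k * e) * δ < 0 →
      ∀ a d : FiscalAct, IsPNEzs u a d ↔ (a = FiscalAct.G ∧ d = FiscalAct.G)) := by
  intro u
  simp only [u, zsFiscalU_eq, isPNEzs_sub_iff, add_le_add_iff_left]
  refine ⟨fun h a d => by simp [h], fun h a d => ?_, fun h a d => ?_⟩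
  · have hc : 0 < (f - k * e) * δ / g := div_pos h hg
    rw [FiscalAct.forall_mul_taxIndicator_le_iff_of_pos hc,
      FiscalAct.forall_mul_taxIndicator_le_iff_of_pos hc]
  · have hc : (f - k * e) * δ / g < 0 := div_neg_of_neg_of_pos h hg
    rw [FiscalAct.forall_mul_taxIndicator_le_iff_of_neg hc,
      FiscalAct.forall_mul_taxIndicator_le_iff_of_neg hc]

/-- structure of the pure Nash equilibria of the zero-sum
fiscal-policy angel-daemon game, according to the sign of (f - k·e)·δ where
δ = b·δ_T - δ_G. -/
theorem zero_sum_fiscal_PNE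
    (Y r k b e f g δT δG : ℝ)
    (hb0 : 0 < b) (hb1 : b < 1) (he : 0 < e) (hf : 0 < f) (hg : 0 < g)
    (hδT : 0 < δT) (hδG : 0 ≤ δG)
    (δ : ℝ) (hδ : δ = b * δT - δG) :
    let u := zsFiscalU Y r k e f g δ
    ((f - k * e) * δ = 0 → ∀ a d : FiscalAct, IsPNEzs u a d) ∧
    (0 < (f - k * e) * δ →
      ∀ a d : FiscalAct, IsPNEzs u a d ↔ (a = FiscalAct.T ∧ d = FiscalAct.T)) ∧
    ((f - k * e) * δ < 0 →
      ∀ a d : FiscalAct, IsPNEzs u a d ↔ (a = FiscalAct.G ∧ d = FiscalAct.G)) :=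
  zero_sum_fiscal_PNE_general Y r k e f g hg δ
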